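/- arXiv:1312.3518 — 2 statements merged into one kernel-verified Lean document; each statement's English description precedes it below -/
import Mathlib

section
/- Let f : ℝ² → ℝ² be a bounded homeomorphism, i.e., sup_{x ∈ ℝ²} |f(x) − x| < ∞, and let φ : ℝ² → int D², φ(x) = x/(1 + |x|), be the radial identification of ℝ² with the open unit disk. Then φ ∘ f ∘ φ⁻¹ : int D² → int D² extends to a homeomorphism G : D² → D² with G equal to the identity on ∂D². -/
/-!
Conjugating by `φ` moves points only by a multiple of the distance to the boundary sphere:
if `y = φ x` then `|φ (f x) - y| ≤ 2 |f x - x| / (1 + |x|) ≤ 2 C (1 - |y|)`. Hence the map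
equal to `φ ∘ f ∘ φ⁻¹` inside the ball and to the identity on the sphere is continuous on the
closed ball, and the same construction for `f⁻¹` (also moving points by at most `C`) inverts it.
-/

noncomputable def radialMap (x : EuclideanSpace ℝ (Fin 2)) : EuclideanSpace ℝ (Fin 2) :=
  (1 + ‖x‖)⁻¹ • x

open Metric Filter Topology

lemma Homeomorph.norm_symm_sub_le {E : Type*} [SeminormedAddCommGroup E] (f : E ≃ₜ E) {C : ℝ}
    (hf : ∀ x, ‖f x - x‖ ≤ C) (y : E) : ‖f.symm y - y‖ ≤ C := by
  simpa [norm_sub_rev] using hf (f.symm y)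

namespace Radial

variable {E : Type*} [NormedAddCommGroup E] [NormedSpace ℝ E]

noncomputable def contract (x : E) : E := (1 + ‖x‖)⁻¹ • x

noncomputable def expand (y : E) : E := (1 - ‖y‖)⁻¹ • y

lemma norm_contract (x : E) : ‖contract x‖ = ‖x‖ / (1 + ‖x‖) := by
  rw [contract, norm_smul, norm_inv, Real.norm_of_nonneg (by positivity), inv_mul_eq_div]

lemma one_sub_norm_contract (x : E) : 1 - ‖contract x‖ = (1 + ‖x‖)⁻¹ := by
  rw [norm_contract]
  field_simp
  ring

lemma norm_contract_lt_one (x : E) : ‖contract x‖ < 1 := by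
  have := one_sub_norm_contract x
  have : 0 < (1 + ‖x‖)⁻¹ := by positivity
  linarith

lemma one_add_norm_expand {y : E} (hy : ‖y‖ < 1) : 1 + ‖expand y‖ = (1 - ‖y‖)⁻¹ := by
  have : 0 < 1 - ‖y‖ := by linarith
  rw [expand, norm_smul, norm_inv, Real.norm_of_nonneg this.le]
  field_simp
  ring

lemma expand_contract (x : E) : expand (contract x) = x := by
  rw [expand, one_sub_norm_contract, inv_inv, contract,
    smul_inv_smul₀ (by positivity : (1 : ℝ) + ‖x‖ ≠ 0)]

lemma contract_expand {y : E} (hy : ‖y‖ < 1) : contract (expand y) = y := by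
  rw [contract, one_add_norm_expand hy, inv_inv, expand,
    smul_inv_smul₀ (by linarith : (1 : ℝ) - ‖y‖ ≠ 0)]

lemma continuous_contract : Continuous (contract : E → E) :=
  ((continuous_const.add continuous_norm).inv₀ fun x =>
    (by positivity : (1 : ℝ) + ‖x‖ ≠ 0)).smul continuous_id

lemma continuousAt_expand {y : E} (hy : ‖y‖ < 1) : ContinuousAt expand y :=
  ((continuous_const.sub continuous_norm).continuousAt.inv₀ (by simp; linarith)).smul
    continuousAt_id

lemma norm_contract_sub_contract_le (a b : E) :
    ‖contract a - contract b‖ ≤ 2 * ‖a - b‖ / (1 + ‖b‖) := by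
  have ha : 0 < 1 + ‖a‖ := by positivity
  have hb : 0 < 1 + ‖b‖ := by positivity
  have hdiff : |(1 + ‖a‖)⁻¹ - (1 + ‖b‖)⁻¹| ≤ ‖a - b‖ / ((1 + ‖a‖) * (1 + ‖b‖)) := by
    rw [inv_sub_inv ha.ne' hb.ne', abs_div, abs_of_pos (mul_pos ha hb)]
    gcongr
    rw [add_sub_add_left_eq_sub, abs_sub_comm]
    exact abs_norm_sub_norm_le a b
  calc ‖contract a - contract b‖
      = ‖(1 + ‖b‖)⁻¹ • (a - b) + ((1 + ‖a‖)⁻¹ - (1 + ‖b‖)⁻¹) • a‖ := by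
        rw [contract, contract]; congr 1; module
    _ ≤ (1 + ‖b‖)⁻¹ * ‖a - b‖ + |(1 + ‖a‖)⁻¹ - (1 + ‖b‖)⁻¹| * ‖a‖ := by
        refine (norm_add_le _ _).trans_eq ?_
        rw [norm_smul, norm_smul, Real.norm_eq_abs, Real.norm_eq_abs, abs_of_pos (inv_pos.2 hb)]
    _ ≤ (1 + ‖b‖)⁻¹ * ‖a - b‖ + ‖a - b‖ / ((1 + ‖a‖) * (1 + ‖b‖)) * (1 + ‖a‖) := by
        gcongr; linarith
    _ = 2 * ‖a - b‖ / (1 + ‖b‖) := by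
        field_simp
        ring

noncomputable def extend (f : E → E) (y : E) : E :=
  if ‖y‖ < 1 then contract (f (expand y)) else y

lemma extend_of_norm_lt_one (f : E → E) {y : E} (hy : ‖y‖ < 1) :
    extend f y = contract (f (expand y)) :=
  if_pos hy

lemma extend_of_norm_eq_one (f : E → E) {y : E} (hy : ‖y‖ = 1) : extend f y = y :=
  if_neg hy.not_lt

lemma extend_contract (f : E → E) (x : E) : extend f (contract x) = contract (f x) := by
  rw [extend_of_norm_lt_one f (norm_contract_lt_one x), expand_contract]

lemma norm_extend_le (f : E → E) {y : E} (hy : ‖y‖ ≤ 1) : ‖extend f y‖ ≤ 1 := by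
  unfold extend
  split_ifs
  exacts [(norm_contract_lt_one _).le, hy]

lemma extend_extend {f g : E → E} (hgf : ∀ x, g (f x) = x) {y : E} (hy : ‖y‖ ≤ 1) :
    extend g (extend f y) = y := by
  rcases hy.lt_or_eq with hy | hy
  · rw [extend_of_norm_lt_one f hy, extend_contract, hgf, contract_expand hy]
  · rw [extend_of_norm_eq_one f hy, extend_of_norm_eq_one g hy]

variable {f : E → E} {C : ℝ}

lemma norm_extend_sub_le (hf : ∀ x, ‖f x - x‖ ≤ C) {y : E} (hy : ‖y‖ ≤ 1) :
    ‖extend f y - y‖ ≤ 2 * C * (1 - ‖y‖) := by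
  rcases hy.lt_or_eq with hy | hy
  · set x := expand y
    calc ‖extend f y - y‖ = ‖contract (f x) - contract x‖ := by
          rw [extend_of_norm_lt_one f hy, contract_expand hy]
      _ ≤ 2 * ‖f x - x‖ / (1 + ‖x‖) := norm_contract_sub_contract_le _ _
      _ ≤ 2 * C / (1 + ‖x‖) := by gcongr; exact hf x
      _ = 2 * C * (1 - ‖y‖) := by rw [one_add_norm_expand hy, div_inv_eq_mul]
  · simp [extend_of_norm_eq_one f hy, hy]

lemma continuousAt_extend (hfc : Continuous f) {y : E} (hy : ‖y‖ < 1) :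
    ContinuousAt (extend f) y := by
  have hball : ∀ᶠ z in 𝓝 y, contract (f (expand z)) = extend f z := by
    filter_upwards [isOpen_ball.mem_nhds (mem_ball_zero_iff.2 hy)] with z hz
    exact (extend_of_norm_lt_one f (mem_ball_zero_iff.1 hz)).symm
  exact (continuous_contract.continuousAt.comp
    (hfc.continuousAt.comp (continuousAt_expand hy))).congr hball

lemma norm_extend_sub_le_of_norm_eq_one (hf : ∀ x, ‖f x - x‖ ≤ C) {y z : E} (hy : ‖y‖ = 1)
    (hz : ‖z‖ ≤ 1) : ‖extend f z - extend f y‖ ≤ (2 * C + 1) * ‖z - y‖ := by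
  have hC : 0 ≤ C := (norm_nonneg _).trans (hf 0)
  have hgap : 1 - ‖z‖ ≤ ‖z - y‖ := by
    simpa [hy] using norm_sub_norm_le y z |>.trans_eq (norm_sub_rev y z)
  calc ‖extend f z - extend f y‖ ≤ ‖extend f z - z‖ + ‖z - y‖ := by
        rw [extend_of_norm_eq_one f hy]; exact norm_sub_le_norm_sub_add_norm_sub _ _ _
    _ ≤ 2 * C * (1 - ‖z‖) + ‖z - y‖ := by gcongr; exact norm_extend_sub_le hf hz
    _ ≤ (2 * C + 1) * ‖z - y‖ := by nlinarith

lemma continuousOn_extend (hfc : Continuous f) (hf : ∀ x, ‖f x - x‖ ≤ C) :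
    ContinuousOn (extend f) (closedBall 0 1) := by
  intro y hy
  rw [mem_closedBall_zero_iff] at hy
  rcases hy.lt_or_eq with hy | hy
  · exact (continuousAt_extend hfc hy).continuousWithinAt
  · rw [ContinuousWithinAt, tendsto_iff_norm_sub_tendsto_zero]
    have hlim : Tendsto (fun z => (2 * C + 1) * ‖z - y‖) (𝓝[closedBall 0 1] y) (𝓝 0) := by
      have : Continuous fun z => (2 * C + 1) * ‖z - y‖ := by fun_prop
      simpa using (this.tendsto y).mono_left nhdsWithin_le_nhds
    refine squeeze_zero' (Eventually.of_forall fun _ => norm_nonneg _) ?_ hlim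
    filter_upwards [self_mem_nhdsWithin] with z hz
    exact norm_extend_sub_le_of_norm_eq_one hf hy (mem_closedBall_zero_iff.1 hz)

noncomputable def extendHomeomorph (f : E ≃ₜ E) (hf : ∀ x, ‖f x - x‖ ≤ C) :
    closedBall (0 : E) 1 ≃ₜ closedBall (0 : E) 1 where
  toFun y :=
    ⟨extend f y, mem_closedBall_zero_iff.2 (norm_extend_le _ (mem_closedBall_zero_iff.1 y.2))⟩
  invFun y :=
    ⟨extend f.symm y, mem_closedBall_zero_iff.2 (norm_extend_le _ (mem_closedBall_zero_iff.1 y.2))⟩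
  left_inv y := Subtype.ext (extend_extend f.symm_apply_apply (mem_closedBall_zero_iff.1 y.2))
  right_inv y := Subtype.ext (extend_extend f.apply_symm_apply (mem_closedBall_zero_iff.1 y.2))
  continuous_toFun := (continuousOn_extend f.continuous hf).domRestrict.subtype_mk _
  continuous_invFun :=
    (continuousOn_extend f.symm.continuous (f.norm_symm_sub_le hf)).domRestrict.subtype_mk _

end Radial

/-- Let `f : ℝ² → ℝ²` be a bounded homeomorphism (`‖f x − x‖ ≤ C` for all `x`) and let
`φ(x) = x/(1 + |x|)` be the radial identification of `ℝ²` with the interior of the unit disk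
`D²`.  Then `φ ∘ f ∘ φ⁻¹ : int D² → int D²` extends to a homeomorphism `G : D² → D²` which is
the identity on `∂D²` (i.e. `G` agrees with `φ ∘ f ∘ φ⁻¹` at every point of the form `φ x`,
and fixes every point of norm one). -/
theorem bounded_homeomorph_extends_to_closed_disk
    (f : EuclideanSpace ℝ (Fin 2) ≃ₜ EuclideanSpace ℝ (Fin 2))
    (C : ℝ) (hf : ∀ x : EuclideanSpace ℝ (Fin 2), ‖f x - x‖ ≤ C) :
    ∃ G : (Metric.closedBall (0 : EuclideanSpace ℝ (Fin 2)) 1) ≃ₜ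
        (Metric.closedBall (0 : EuclideanSpace ℝ (Fin 2)) 1),
      (∀ y : Metric.closedBall (0 : EuclideanSpace ℝ (Fin 2)) 1,
        ‖(y : EuclideanSpace ℝ (Fin 2))‖ = 1 → G y = y) ∧
      (∀ (y : Metric.closedBall (0 : EuclideanSpace ℝ (Fin 2)) 1)
        (x : EuclideanSpace ℝ (Fin 2)),
        (y : EuclideanSpace ℝ (Fin 2)) = radialMap x →
          (G y : EuclideanSpace ℝ (Fin 2)) = radialMap (f x)) :=
  -- `radialMap` is `Radial.contract` on `ℝ²` by definition.
  ⟨Radial.extendHomeomorph f hf,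
    fun _ hy => Subtype.ext (Radial.extend_of_norm_eq_one f hy),
    fun _ x hyx => (congrArg _ hyx).trans (Radial.extend_contract f x)⟩
end

section
/- (Alexander trick) Every homeomorphism G : D² → D² that restricts to the identity on ∂D² is isotopic to the identity through homeomorphisms that fix ∂D² pointwise: there is a continuous family of homeomorphisms G_t : D² → D², t ∈ [0,1], each equal to the identity on ∂D², with G_0 = id and G_1 = G. Explicitly, one may take G_t(x) = t·G(x/t) for |x| < t and G_t(x) = x for |x| ≥ t. -/
/-!
Extend `G` by the identity to a homeomorphism `f` of the whole plane, and conjugate it by the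
dilation `x ↦ t • x`: the conjugate `x ↦ t • f (t⁻¹ • x)` is `f` squeezed into the disk of radius
`t`, so it still fixes the unit circle and preserves the unit disk. Since `f` moves points by at
most `2`, its conjugate moves them by at most `2 t`, which makes the family continuous at `t = 0`,
where it becomes the identity.
-/

open Metric Set Filter Topology

section ExtendById

variable {X : Type*} {s : Set X}

open Classical in
noncomputable def Set.extendById (s : Set X) (g : s → s) (x : X) : X :=
  if h : x ∈ s then g ⟨x, h⟩ else x

theorem Set.extendById_of_mem (g : s → s) {x : X} (hx : x ∈ s) :
    s.extendById g x = g ⟨x, hx⟩ :=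
  dif_pos hx

theorem Set.extendById_of_notMem (g : s → s) {x : X} (hx : x ∉ s) : s.extendById g x = x :=
  dif_neg hx

theorem Set.extendById_coe (g : s → s) (x : s) : s.extendById g x = g x :=
  s.extendById_of_mem g x.2

theorem Set.extendById_mem (g : s → s) {x : X} (hx : x ∈ s) : s.extendById g x ∈ s := by
  rw [s.extendById_of_mem g hx]
  exact Subtype.prop _

theorem Set.extendById_id (x : X) : s.extendById id x = x := by
  by_cases hx : x ∈ s
  · rw [s.extendById_of_mem id hx, id]
  · exact s.extendById_of_notMem id hx

theorem Set.extendById_extendById (g g' : s → s) (x : X) :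
    s.extendById g (s.extendById g' x) = s.extendById (g ∘ g') x := by
  by_cases hx : x ∈ s
  · rw [s.extendById_of_mem g' hx, s.extendById_coe, s.extendById_of_mem _ hx, Function.comp]
  · rw [s.extendById_of_notMem g' hx, s.extendById_of_notMem g hx, s.extendById_of_notMem _ hx]

variable [TopologicalSpace X]

theorem Set.continuous_extendById (hs : IsClosed s) {g : s → s} (hg : Continuous g)
    (hfix : ∀ x : s, (x : X) ∈ frontier s → g x = x) : Continuous (s.extendById g) := by
  have on_s : ContinuousOn (s.extendById g) s := by
    rw [continuousOn_iff_continuous_domRestrict]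
    exact (continuous_subtype_val.comp hg).congr fun x => (s.extendById_coe g x).symm
  have on_closure_compl : ContinuousOn (s.extendById g) (closure sᶜ) := by
    refine continuousOn_id.congr fun x hx => ?_
    by_cases hxs : x ∈ s
    · rw [s.extendById_of_mem g hxs, hfix ⟨x, hxs⟩ ?_]
      · rfl
      · rw [frontier_eq_closure_inter_closure]
        exact ⟨subset_closure hxs, hx⟩
    · exact s.extendById_of_notMem g hxs
  have cover : s ∪ closure sᶜ = univ :=
    eq_univ_of_forall fun x => (em (x ∈ s)).imp_right fun hx => subset_closure hx
  rw [← continuousOn_univ, ← cover]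
  exact on_s.union_of_isClosed on_closure_compl hs isClosed_closure

noncomputable def Homeomorph.extendById (G : s ≃ₜ s) (hs : IsClosed s)
    (hG : ∀ x : s, (x : X) ∈ frontier s → G x = x) : X ≃ₜ X where
  toFun := s.extendById G
  invFun := s.extendById G.symm
  left_inv x := by rw [s.extendById_extendById, G.symm_comp_self, s.extendById_id]
  right_inv x := by rw [s.extendById_extendById, G.self_comp_symm, s.extendById_id]
  continuous_toFun := s.continuous_extendById hs G.continuous hG
  continuous_invFun := s.continuous_extendById hs G.symm.continuous fun x hx =>
    G.symm_apply_eq.2 (hG x hx).symm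

theorem Homeomorph.extendById_apply (G : s ≃ₜ s) (hs : IsClosed s)
    (hG : ∀ x : s, (x : X) ∈ frontier s → G x = x) (x : X) :
    G.extendById hs hG x = s.extendById G x :=
  rfl

end ExtendById

theorem norm_extendById_closedBall_sub_le {E : Type*} [SeminormedAddCommGroup E]
    (g : closedBall (0 : E) 1 → closedBall (0 : E) 1) (x : E) :
    ‖(closedBall (0 : E) 1).extendById g x - x‖ ≤ 2 := by
  by_cases hx : x ∈ closedBall (0 : E) 1
  · have hgx := (closedBall (0 : E) 1).extendById_mem g hx
    rw [mem_closedBall_zero_iff] at hx hgx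
    calc _ ≤ ‖(closedBall (0 : E) 1).extendById g x‖ + ‖x‖ := norm_sub_le _ _
      _ ≤ 2 := by linarith
  · rw [(closedBall (0 : E) 1).extendById_of_notMem g hx, sub_self, norm_zero]
    exact zero_le_two

theorem Homeomorph.norm_symm_apply_sub_le {E : Type*} [SeminormedAddCommGroup E]
    (f : E ≃ₜ E) {C : ℝ} (hC : ∀ y, ‖f y - y‖ ≤ C) (y : E) :
    ‖f.symm y - y‖ ≤ C := by
  simpa [norm_sub_rev] using hC (f.symm y)

section DilationConj

variable {E : Type*} [SeminormedAddCommGroup E] [NormedSpace ℝ E]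

/-- The conjugate `x ↦ t • f (t⁻¹ • x)` of `f` by the dilation by `t ≠ 0`, written so that the
junk value `0⁻¹ = 0` makes it the identity at `t = 0`. -/
noncomputable def dilationConj (f : E → E) (t : ℝ) (x : E) : E :=
  x + t • (f (t⁻¹ • x) - t⁻¹ • x)

variable {f : E → E} {t C : ℝ}

@[simp]
theorem dilationConj_zero (f : E → E) : dilationConj f 0 = id := by
  ext x
  simp [dilationConj]

theorem dilationConj_of_ne_zero (f : E → E) (ht : t ≠ 0) (x : E) :
    dilationConj f t x = t • f (t⁻¹ • x) := by
  rw [dilationConj, smul_sub, smul_inv_smul₀ ht, add_sub_cancel]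

@[simp]
theorem dilationConj_one (f : E → E) : dilationConj f 1 = f := by
  ext x
  simp [dilationConj_of_ne_zero f one_ne_zero]

@[simp]
theorem dilationConj_id (t : ℝ) : dilationConj (id : E → E) t = id := by
  ext x
  simp [dilationConj]

theorem dilationConj_dilationConj (f g : E → E) (t : ℝ) (x : E) :
    dilationConj f t (dilationConj g t x) = dilationConj (f ∘ g) t x := by
  rcases eq_or_ne t 0 with rfl | ht
  · simp
  · simp only [dilationConj_of_ne_zero _ ht, inv_smul_smul₀ ht, Function.comp]

theorem norm_dilationConj_sub_le (hC : ∀ y, ‖f y - y‖ ≤ C) (t : ℝ) (x : E) :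
    ‖dilationConj f t x - x‖ ≤ |t| * C := by
  rw [dilationConj, add_sub_cancel_left, norm_smul, Real.norm_eq_abs]
  exact mul_le_mul_of_nonneg_left (hC _) (abs_nonneg t)

theorem continuous_dilationConj (hf : Continuous f) (hC : ∀ y, ‖f y - y‖ ≤ C) :
    Continuous fun p : E × ℝ => dilationConj f p.2 p.1 := by
  rw [continuous_iff_continuousAt]
  rintro ⟨x, t⟩
  rcases eq_or_ne t 0 with rfl | ht
  · rw [ContinuousAt, dilationConj_zero, id, tendsto_iff_norm_sub_tendsto_zero]
    have hbound : Tendsto (fun p : E × ℝ => |p.2| * C + ‖p.1 - x‖) (𝓝 (x, 0)) (𝓝 0) := by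
      have : Continuous fun p : E × ℝ => |p.2| * C + ‖p.1 - x‖ := by fun_prop
      simpa using this.tendsto (x, 0)
    refine squeeze_zero (fun _ => norm_nonneg _) (fun p => ?_) hbound
    calc ‖dilationConj f p.2 p.1 - x‖
        ≤ ‖dilationConj f p.2 p.1 - p.1‖ + ‖p.1 - x‖ := norm_sub_le_norm_sub_add_norm_sub _ _ _
      _ ≤ |p.2| * C + ‖p.1 - x‖ := by gcongr; exact norm_dilationConj_sub_le hC _ _
  · have hinv : ContinuousAt (fun p : E × ℝ => p.2⁻¹ • p.1) (x, t) :=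
      (continuousAt_snd.inv₀ ht).smul continuousAt_fst
    exact continuousAt_fst.add
      (continuousAt_snd.smul ((hf.continuousAt.comp hinv).sub hinv))

theorem dilationConj_eq_self (hf : ∀ y, 1 ≤ ‖y‖ → f y = y) {x : E} (hx : |t| ≤ ‖x‖) :
    dilationConj f t x = x := by
  rcases eq_or_ne t 0 with rfl | ht
  · simp
  · have : 1 ≤ ‖t⁻¹ • x‖ := by
      rw [norm_smul, norm_inv, Real.norm_eq_abs, ← div_eq_inv_mul]
      exact (one_le_div (abs_pos.2 ht)).2 hx
    rw [dilationConj, hf _ this, sub_self, smul_zero, add_zero]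

theorem dilationConj_mem_closedBall_iff (hmaps : MapsTo f (closedBall 0 1) (closedBall 0 1))
    (hf : ∀ y, 1 ≤ ‖y‖ → f y = y) (ht : |t| ≤ 1) {x : E} :
    dilationConj f t x ∈ closedBall 0 1 ↔ x ∈ closedBall 0 1 := by
  by_cases hx : |t| ≤ ‖x‖
  · rw [dilationConj_eq_self hf hx]
  · rw [not_le] at hx
    have ht0 : t ≠ 0 := abs_pos.1 ((norm_nonneg x).trans_lt hx)
    have hscaled : t⁻¹ • x ∈ closedBall 0 1 := by
      rw [mem_closedBall_zero_iff, norm_smul, norm_inv, Real.norm_eq_abs, inv_mul_le_iff₀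
        (abs_pos.2 ht0), mul_one]
      exact hx.le
    have hfx := mem_closedBall_zero_iff.1 (hmaps hscaled)
    simp only [mem_closedBall_zero_iff, dilationConj_of_ne_zero f ht0, norm_smul,
      Real.norm_eq_abs]
    constructor <;> intro <;> nlinarith [abs_nonneg t, norm_nonneg x]

noncomputable def Homeomorph.dilationConj (f : E ≃ₜ E) (hC : ∀ y, ‖f y - y‖ ≤ C) (t : ℝ) : E ≃ₜ E where
  toFun := _root_.dilationConj f t
  invFun := _root_.dilationConj f.symm t
  left_inv x := by rw [dilationConj_dilationConj, f.symm_comp_self, dilationConj_id, id]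
  right_inv x := by rw [dilationConj_dilationConj, f.self_comp_symm, dilationConj_id, id]
  continuous_toFun :=
    (continuous_dilationConj f.continuous hC).comp (Continuous.prodMk_left t)
  continuous_invFun :=
    (continuous_dilationConj f.symm.continuous (f.norm_symm_apply_sub_le hC)).comp
      (Continuous.prodMk_left t)

end DilationConj

section AlexanderIsotopy

variable {E : Type*} [SeminormedAddCommGroup E]
  (G : closedBall (0 : E) 1 ≃ₜ closedBall (0 : E) 1)
  (hG : ∀ y : closedBall (0 : E) 1, ‖(y : E)‖ = 1 → G y = y)

noncomputable def alexanderExtension : E ≃ₜ E :=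
  G.extendById isClosed_closedBall fun y hy =>
    hG y (mem_sphere_zero_iff_norm.1 (frontier_closedBall_subset_sphere hy))

theorem alexanderExtension_eq_self {y : E} (hy : 1 ≤ ‖y‖) : alexanderExtension G hG y = y := by
  by_cases hy' : y ∈ closedBall (0 : E) 1
  · rw [alexanderExtension, G.extendById_apply, Set.extendById_of_mem _ hy',
      hG _ (le_antisymm (mem_closedBall_zero_iff.1 hy') hy)]
  · exact Set.extendById_of_notMem _ hy'

theorem mapsTo_alexanderExtension :
    MapsTo (alexanderExtension G hG) (closedBall 0 1) (closedBall 0 1) :=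
  fun _ => Set.extendById_mem _

variable [NormedSpace ℝ E]

noncomputable def alexanderIsotopy (t : unitInterval) :
    closedBall (0 : E) 1 ≃ₜ closedBall (0 : E) 1 :=
  ((alexanderExtension G hG).dilationConj (norm_extendById_closedBall_sub_le G) t).subtype
    fun _ => (dilationConj_mem_closedBall_iff (mapsTo_alexanderExtension G hG)
      (fun _ => alexanderExtension_eq_self G hG) (abs_le.2 ⟨by linarith [t.2.1], t.2.2⟩)).symm

theorem coe_alexanderIsotopy_apply (t : unitInterval) (x : closedBall (0 : E) 1) :
    (alexanderIsotopy G hG t x : E) = dilationConj (alexanderExtension G hG) t x :=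
  rfl

theorem continuous_alexanderIsotopy :
    Continuous fun p : closedBall (0 : E) 1 × unitInterval => alexanderIsotopy G hG p.2 p.1 :=
  ((continuous_dilationConj (alexanderExtension G hG).continuous
    (norm_extendById_closedBall_sub_le G)).comp
      ((continuous_subtype_val.comp continuous_fst).prodMk
        (continuous_subtype_val.comp continuous_snd))).subtype_mk _

theorem alexanderIsotopy_apply_of_norm_eq_one (t : unitInterval) {y : closedBall (0 : E) 1}
    (hy : ‖(y : E)‖ = 1) : alexanderIsotopy G hG t y = y :=
  Subtype.ext <| dilationConj_eq_self (fun _ => alexanderExtension_eq_self G hG) <| by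
    rw [hy, abs_of_nonneg t.2.1]
    exact t.2.2

theorem alexanderIsotopy_zero : ⇑(alexanderIsotopy G hG 0) = id := by
  ext x
  simp [coe_alexanderIsotopy_apply]

theorem alexanderIsotopy_one : ⇑(alexanderIsotopy G hG 1) = G := by
  ext x
  simp [coe_alexanderIsotopy_apply, alexanderExtension, Homeomorph.extendById_apply,
    Set.extendById_coe]

end AlexanderIsotopy

/-- **Alexander trick.** Every homeomorphism `G : D² → D²` of the closed unit disk which
restricts to the identity on `∂D²` is isotopic to the identity through homeomorphisms fixing
`∂D²` pointwise: there is a continuous family of homeomorphisms `H t : D² → D²`, `t ∈ [0,1]`,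
each equal to the identity on `∂D²`, with `H 0 = id` and `H 1 = G`.  (Explicitly one may take
`H t x = t • G (x/t)` for `|x| < t` and `H t x = x` for `|x| ≥ t`.) -/
theorem alexander_trick
    (G : (Metric.closedBall (0 : EuclideanSpace ℝ (Fin 2)) 1) ≃ₜ
      (Metric.closedBall (0 : EuclideanSpace ℝ (Fin 2)) 1))
    (hG : ∀ y : Metric.closedBall (0 : EuclideanSpace ℝ (Fin 2)) 1,
      ‖(y : EuclideanSpace ℝ (Fin 2))‖ = 1 → G y = y) :
    ∃ H : unitInterval → Metric.closedBall (0 : EuclideanSpace ℝ (Fin 2)) 1 →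
        Metric.closedBall (0 : EuclideanSpace ℝ (Fin 2)) 1,
      Continuous (fun p : Metric.closedBall (0 : EuclideanSpace ℝ (Fin 2)) 1 × unitInterval =>
        H p.2 p.1) ∧
      (∀ t, ∃ e : (Metric.closedBall (0 : EuclideanSpace ℝ (Fin 2)) 1) ≃ₜ
        (Metric.closedBall (0 : EuclideanSpace ℝ (Fin 2)) 1), ⇑e = H t) ∧
      (∀ (t : unitInterval) (y : Metric.closedBall (0 : EuclideanSpace ℝ (Fin 2)) 1),
        ‖(y : EuclideanSpace ℝ (Fin 2))‖ = 1 → H t y = y) ∧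
      H 0 = id ∧
      H 1 = ⇑G :=
  ⟨fun t => alexanderIsotopy G hG t, continuous_alexanderIsotopy G hG, fun _ => ⟨_, rfl⟩,
    fun t _ hy => alexanderIsotopy_apply_of_norm_eq_one G hG t hy, alexanderIsotopy_zero G hG,
    alexanderIsotopy_one G hG⟩
end
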